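/- arXiv:0705.1763 — 2 statements merged into one kernel-verified Lean document; each statement's English description precedes it below -/
import Mathlib

section
/- Let g be an entire (holomorphic) function on ℂⁿ satisfying the growth bound |g(z)| ≤ C e^{(ν/2)|z|²} for some constant C and all z. Then g satisfies the Bargmann–Fock reproducing formula: g(z) = (ν/π)ⁿ ∫_{ℂⁿ} e^{ν⟨z,w⟩} g(w) e^{−ν|w|²} dm(w) for every z ∈ ℂⁿ. -/
/-!
Translating by `z`, the reproducing integral becomes `∫ e^{-ν|u|²} h(u) dm(u)` for the entire
function `h(u) = e^{-ν⟨u,z⟩} g(u + z)`, and the growth bound on `g` dominates this integrand by the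
Gaussian `e^{-ν|u|²/2}`. For every entire `h` for which it is integrable, the Gaussian integral
equals `(π/ν)ⁿ h(0)`: in one variable, polar coordinates and the mean value property on circles
give `∫₀^∞ r e^{-νr²} 2π h(0) dr = (π/ν) h(0)`, and Fubini peels off one coordinate at a time.
-/

open MeasureTheory Complex

noncomputable section

/-- Hermitian form ⟨z,w⟩ = ∑ zⱼ conj(wⱼ) on ℂⁿ. -/
def herm {n : ℕ} (z w : Fin n → ℂ) : ℂ := ∑ j, z j * (starRingEnd ℂ) (w j)

/-- Symplectic form ω(z,w) = Im⟨z,w⟩. -/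
def symp {n : ℕ} (z w : Fin n → ℂ) : ℝ := (herm z w).im

/-- Squared Euclidean norm |z|². -/
def absq {n : ℕ} (z : Fin n → ℂ) : ℝ := ∑ j, Complex.normSq (z j)

open Real Set Filter

theorem Complex.integrableOn_comp_polarCoord_symm {E : Type*} [NormedAddCommGroup E]
    [NormedSpace ℝ E] {f : ℂ → E} (hf : Integrable f) :
    IntegrableOn (fun p : ℝ × ℝ => p.1 • f (Complex.polarCoord.symm p)) polarCoord.target := by
  have hR : Integrable (f ∘ measurableEquivRealProd.symm) :=
    (volume_preserving_equiv_real_prod.symm.integrable_comp_emb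
      measurableEquivRealProd.symm.measurableEmbedding).2 hf
  have hsrc := hR.integrableOn (s := polarCoord.symm '' polarCoord.target)
  rw [integrableOn_image_iff_integrableOn_abs_det_fderiv_smul volume
    polarCoord.open_target.measurableSet
    (fun p _ => (hasFDerivAt_polarCoord_symm p).hasFDerivWithinAt) polarCoord.symm.injOn] at hsrc
  refine hsrc.congr_fun (fun p hp => ?_) polarCoord.open_target.measurableSet
  simp only [Function.comp_apply, det_fderivPolarCoordSymm,
    measurableEquivRealProd_symm_polarCoord_symm_apply, abs_of_pos (show 0 < p.1 from hp.1)]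

theorem Complex.polarCoord_symm_eq_circleMap (p : ℝ × ℝ) :
    Complex.polarCoord.symm p = circleMap 0 p.1 p.2 := by
  simp [Complex.polarCoord_symm_apply, circleMap, Complex.exp_mul_I, ← ofReal_cos, ← ofReal_sin]

theorem Differentiable.integral_Ioo_circleMap {E : Type*} [NormedAddCommGroup E]
    [NormedSpace ℂ E] [CompleteSpace E] {f : ℂ → E} (hf : Differentiable ℂ f) (r : ℝ) :
    ∫ θ in Ioo (-π) π, f (circleMap 0 r θ) = (2 * π) • f 0 := by
  have hmean : circleAverage f 0 r = f 0 := hf.diffContOnCl.circleAverage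
  have hshift := ((periodic_circleMap 0 r).comp f).intervalIntegral_add_eq (-π) 0
  rw [show -π + 2 * π = π by ring, zero_add, Function.comp_def] at hshift
  rw [← integral_Ioc_eq_integral_Ioo, ← intervalIntegral.integral_of_le (by linarith [pi_pos]),
    hshift, ← hmean, circleAverage_def, smul_inv_smul₀ (by positivity)]

theorem integral_Ioi_mul_exp_neg_mul_sq {b : ℝ} (hb : 0 < b) :
    ∫ r in Ioi (0 : ℝ), r * Real.exp (-b * r ^ 2) = (2 * b)⁻¹ := by
  have h := integral_mul_cexp_neg_mul_sq (b := b) (by simpa using hb)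
  rw [← ofReal_inj, ← integral_complex_ofReal]
  push_cast
  simpa [ofReal_exp] using h

theorem Differentiable.integral_exp_neg_mul_norm_sq_smul {E : Type*} [NormedAddCommGroup E]
    [NormedSpace ℂ E] [CompleteSpace E] {ν : ℝ} (hν : 0 < ν) {f : ℂ → E}
    (hf : Differentiable ℂ f) (hint : Integrable fun w : ℂ => Real.exp (-ν * ‖w‖ ^ 2) • f w) :
    ∫ w : ℂ, Real.exp (-ν * ‖w‖ ^ 2) • f w = (π / ν) • f 0 := by
  have hpolar := Complex.integrableOn_comp_polarCoord_symm hint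
  rw [polarCoord_target, Measure.volume_eq_prod] at hpolar
  rw [← Complex.integral_comp_polarCoord_symm, polarCoord_target, Measure.volume_eq_prod,
    setIntegral_prod _ hpolar]
  calc _ = ∫ r in Ioi 0, (r * Real.exp (-ν * r ^ 2)) • ((2 * π) • f 0) := by
        refine setIntegral_congr_fun measurableSet_Ioi fun r hr => ?_
        simp only [Complex.polarCoord_symm_eq_circleMap, norm_circleMap_zero, abs_of_pos hr.out,
          smul_smul, integral_smul, hf.integral_Ioo_circleMap]
    _ = (π / ν) • f 0 := by
        rw [integral_smul_const, integral_Ioi_mul_exp_neg_mul_sq hν, smul_smul]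
        congr 1
        field_simp

theorem absq_cons {n : ℕ} (x : ℂ) (y : Fin n → ℂ) :
    absq (Fin.cons x y : Fin (n + 1) → ℂ) = ‖x‖ ^ 2 + absq y := by
  simp [absq, Fin.sum_univ_succ, Complex.normSq_eq_norm_sq]

theorem absq_add {n : ℕ} (u z : Fin n → ℂ) :
    absq (u + z) = absq u + 2 * (herm u z).re + absq z := by
  simp only [absq, herm, Pi.add_apply, Complex.normSq_add, re_sum, Finset.mul_sum,
    Finset.sum_add_distrib]
  ring

theorem continuous_absq {n : ℕ} : Continuous (absq : (Fin n → ℂ) → ℝ) := by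
  unfold absq
  fun_prop

theorem ofReal_absq {n : ℕ} (z : Fin n → ℂ) : (absq z : ℂ) = herm z z := by
  simp only [absq, herm, ofReal_sum, Complex.mul_conj]

theorem herm_add_left {n : ℕ} (u v w : Fin n → ℂ) : herm (u + v) w = herm u w + herm v w := by
  simp [herm, add_mul, Finset.sum_add_distrib]

theorem herm_add_right {n : ℕ} (u v w : Fin n → ℂ) : herm u (v + w) = herm u v + herm u w := by
  simp [herm, mul_add, Finset.sum_add_distrib]

theorem herm_zero_left {n : ℕ} (w : Fin n → ℂ) : herm 0 w = 0 := by
  simp [herm]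

theorem differentiable_herm_left {n : ℕ} (z : Fin n → ℂ) :
    Differentiable ℂ fun w : Fin n → ℂ => herm w z := by
  unfold herm
  fun_prop

theorem Differentiable.integral_exp_neg_mul_absq_smul {E : Type*} [NormedAddCommGroup E]
    [NormedSpace ℂ E] [CompleteSpace E] {ν : ℝ} (hν : 0 < ν) {n : ℕ}
    {f : (Fin n → ℂ) → E} (hf : Differentiable ℂ f)
    (hint : Integrable fun w => Real.exp (-ν * absq w) • f w) :
    ∫ w, Real.exp (-ν * absq w) • f w = (π / ν) ^ n • f 0 := by
  induction n with
  | zero =>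
    rw [integral_unique]
    simp [absq, Measure.real, volume_pi]
    exact congrArg f (Subsingleton.elim _ _)
  | succ n ih =>
    set F := fun w : Fin (n + 1) → ℂ => Real.exp (-ν * absq w) • f w
    have hsplit : ∀ x y, F (Fin.cons x y) =
        Real.exp (-ν * ‖x‖ ^ 2) • Real.exp (-ν * absq y) • f (Fin.cons x y) := by
      intro x y
      simp only [F, absq_cons, smul_smul, ← Real.exp_add, mul_add]
    have hmp := (volume_preserving_piFinSuccAbove (fun _ : Fin (n + 1) => ℂ) 0).symm
    have hcons : ∀ p : ℂ × (Fin n → ℂ),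
        (MeasurableEquiv.piFinSuccAbove (fun _ => ℂ) 0).symm p = Fin.cons p.1 p.2 :=
      fun p => Fin.insertNth_zero' p.1 p.2
    have hprod : Integrable (fun p : ℂ × (Fin n → ℂ) => F (Fin.cons p.1 p.2))
        (volume.prod volume) := by
      simpa only [Function.comp_def, hcons, Measure.volume_eq_prod] using
        (hmp.integrable_comp_emb (MeasurableEquiv.measurableEmbedding _)).2 hint
    have hslice : ∀ᵐ x : ℂ, ∫ y, F (Fin.cons x y) =
        Real.exp (-ν * ‖x‖ ^ 2) • (π / ν) ^ n • f (Fin.cons x 0) := by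
      filter_upwards [hprod.prod_right_ae] with x hx
      simp only [hsplit] at hx ⊢
      have hfx : Differentiable ℂ fun y => f (Fin.cons x y) := by fun_prop
      rw [integral_smul, ih hfx ((integrable_smul_iff (Real.exp_pos _).ne' _).1 hx)]
    have hout : Integrable fun x : ℂ => Real.exp (-ν * ‖x‖ ^ 2) • (π / ν) ^ n • f (Fin.cons x 0) :=
      hprod.integral_prod_left.congr hslice
    calc ∫ w, F w = ∫ p : ℂ × (Fin n → ℂ), F (Fin.cons p.1 p.2) := by
          rw [← hmp.integral_comp (MeasurableEquiv.measurableEmbedding _)]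
          simp only [hcons]
      _ = ∫ x, Real.exp (-ν * ‖x‖ ^ 2) • (π / ν) ^ n • f (Fin.cons x 0) := by
          rw [Measure.volume_eq_prod, integral_prod _ hprod, integral_congr_ae hslice]
      _ = (π / ν) ^ (n + 1) • f 0 := by
          have hf0 : Differentiable ℂ fun x => (π / ν) ^ n • f (Fin.cons x 0) := by fun_prop
          rw [hf0.integral_exp_neg_mul_norm_sq_smul hν hout]
          have hzero : (Fin.cons 0 0 : Fin (n + 1) → ℂ) = 0 := Fin.cons_self_tail 0
          rw [smul_smul, ← pow_succ', hzero]

theorem integrable_exp_neg_mul_absq {n : ℕ} {c : ℝ} (hc : 0 < c) :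
    Integrable fun w : Fin n → ℂ => Real.exp (-c * absq w) := by
  have hcoord : Integrable fun x : ℂ => Real.exp (-c * ‖x‖ ^ 2) := by
    have h := (GaussianFourier.integrable_cexp_neg_mul_sq_norm_add (V := ℂ) (b := c)
      (by simpa using hc) 0 0).norm
    refine h.congr (Eventually.of_forall fun x => ?_)
    simp [Complex.norm_exp, ← ofReal_pow, ← ofReal_mul]
  refine (Integrable.fintype_prod fun _ => hcoord).congr (Eventually.of_forall fun w => ?_)
  simp only [absq, Complex.normSq_eq_norm_sq, Finset.mul_sum, Real.exp_sum]

theorem cexp_herm_mul_exp_absq_add {n : ℕ} (ν : ℝ) (u z : Fin n → ℂ) :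
    cexp (ν * herm z (u + z)) * (Real.exp (-ν * absq (u + z)) : ℂ) =
      cexp (-ν * herm u z) * (Real.exp (-ν * absq u) : ℂ) := by
  rw [ofReal_exp, ofReal_exp, ← Complex.exp_add, ← Complex.exp_add]
  congr 1
  push_cast
  rw [ofReal_absq, ofReal_absq, herm_add_left, herm_add_right, herm_add_right]
  ring

theorem norm_exp_neg_mul_absq_smul_translate_le {n : ℕ} {ν C : ℝ} {g : (Fin n → ℂ) → ℂ}
    (hgrow : ∀ z, ‖g z‖ ≤ C * Real.exp (ν / 2 * absq z)) (z u : Fin n → ℂ) :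
    ‖Real.exp (-ν * absq u) • (cexp (-ν * herm u z) * g (u + z))‖ ≤
      C * Real.exp (ν / 2 * absq z) * Real.exp (-(ν / 2) * absq u) := by
  have hre : (-(ν : ℂ) * herm u z).re = -ν * (herm u z).re := by
    rw [← ofReal_neg, re_ofReal_mul]
  rw [norm_smul, norm_mul, Real.norm_of_nonneg (Real.exp_pos _).le, Complex.norm_exp, hre]
  calc Real.exp (-ν * absq u) * (Real.exp (-ν * (herm u z).re) * ‖g (u + z)‖)
      ≤ Real.exp (-ν * absq u) * (Real.exp (-ν * (herm u z).re) *
          (C * Real.exp (ν / 2 * absq (u + z)))) := by gcongr; exact hgrow _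
    _ = C * Real.exp (-ν * absq u + -ν * (herm u z).re + ν / 2 * absq (u + z)) := by
        rw [Real.exp_add, Real.exp_add]; ring
    _ = C * Real.exp (ν / 2 * absq z) * Real.exp (-(ν / 2) * absq u) := by
        -- the cross term `2 Re⟨u, z⟩` of `|u + z|²` cancels the one coming from the kernel
        rw [mul_assoc, ← Real.exp_add, absq_add]; ring_nf

/-- Bargmann–Fock reproducing formula for entire functions of growth O(e^{(ν/2)|z|²}). -/
theorem stmt_7 {n : ℕ} (ν : ℝ) (hν : 0 < ν) (g : (Fin n → ℂ) → ℂ)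
    (hg : Differentiable ℂ g) (C : ℝ)
    (hgrow : ∀ z, ‖g z‖ ≤ C * Real.exp (ν / 2 * absq z)) :
    ∀ z : Fin n → ℂ, g z = (((ν / Real.pi) ^ n : ℝ) : ℂ) *
      ∫ w : Fin n → ℂ,
        Complex.exp ((ν : ℂ) * herm z w) * g w * ((Real.exp (-ν * absq w) : ℝ) : ℂ) := by
  intro z
  set h : (Fin n → ℂ) → ℂ := fun u => cexp (-ν * herm u z) * g (u + z)
  have hh : Differentiable ℂ h :=
    ((differentiable_herm_left z).const_mul _).cexp.mul (hg.comp (differentiable_id.add_const z))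
  have hint : Integrable fun u => Real.exp (-ν * absq u) • h u :=
    ((integrable_exp_neg_mul_absq (half_pos hν)).const_mul _).mono'
      ((continuous_const.mul continuous_absq).rexp.smul hh.continuous).aestronglyMeasurable
      (Eventually.of_forall (norm_exp_neg_mul_absq_smul_translate_le hgrow z))
  have htranslate : ∀ u, cexp (ν * herm z (u + z)) * g (u + z) * (Real.exp (-ν * absq (u + z)) : ℂ)
      = Real.exp (-ν * absq u) • h u := by
    intro u
    rw [mul_right_comm, cexp_herm_mul_exp_absq_add, real_smul]
    ring
  rw [← integral_add_right_eq_self _ z]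
  simp only [htranslate]
  rw [hh.integral_exp_neg_mul_absq_smul hν hint]
  simp only [h, herm_zero_left, zero_add, mul_zero, Complex.exp_zero, one_mul, real_smul]
  have hinv : ν / π * (π / ν) = 1 := by field_simp
  rw [← mul_assoc, ← ofReal_mul, ← mul_pow, hinv, one_pow, ofReal_one, one_mul]
end
end

section
/- A smooth kernel function K on ℂⁿ × ℂⁿ satisfies the G-invariance K(az+b, aw+b) = conj(j_ν(g,z)) K(z,w) j_ν(g,w) for all g = (a,b) ∈ U(n) ⋉ ℂⁿ (where j_ν(g,z) = e^{iν ω(z, g⁻¹·0)}) if and only if it has the form K(z,w) = e^{iν ω(z,w)} Q(|z−w|) for some function Q on [0,∞). -/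
open MeasureTheory Complex Matrix

noncomputable section

/-- The automorphy factor j_ν(g,z) = e^{iν ω(z, g⁻¹·0)} for g = (a,b) ∈ U(n) ⋉ ℂⁿ,
where g·z = az + b and g⁻¹·0 = -a⁻¹b = -a*b. -/
def jfac {n : ℕ} (ν : ℝ) (a : Matrix.unitaryGroup (Fin n) ℂ) (b : Fin n → ℂ)
    (z : Fin n → ℂ) : ℂ :=
  Complex.exp (Complex.I * ν * symp z (-(star (a : Matrix (Fin n) (Fin n) ℂ) *ᵥ b)))

/-- The transformation T^ν_g f(z) = j_ν(g,z) f(g·z). -/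
def Tmap {n : ℕ} (ν : ℝ) (a : Matrix.unitaryGroup (Fin n) ℂ) (b : Fin n → ℂ)
    (f : (Fin n → ℂ) → ℂ) (z : Fin n → ℂ) : ℂ :=
  jfac ν a b z * f ((a : Matrix (Fin n) (Fin n) ℂ) *ᵥ z + b)

lemma herm_add_add {n : ℕ} (x y u v : Fin n → ℂ) :
    herm (x + y) (u + v) = herm x u + herm x v + herm y u + herm y v := by
  simp only [herm, Pi.add_apply, map_add, _root_.map_mul, add_mul, mul_add, Finset.sum_add_distrib]
  ring

lemma herm_mulVec {n : ℕ} (A : Matrix (Fin n) (Fin n) ℂ) (z w : Fin n → ℂ) :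
    herm (A *ᵥ z) w = herm z (star A *ᵥ w) := by
  simp only [herm, Matrix.mulVec, dotProduct, Matrix.star_apply, Complex.star_def, map_sum,
    _root_.map_mul, Finset.sum_mul, Finset.mul_sum, Complex.conj_conj]
  rw [Finset.sum_comm]
  exact Finset.sum_congr rfl fun i _ => Finset.sum_congr rfl fun j _ => by ring

lemma herm_conj {n : ℕ} (z w : Fin n → ℂ) : herm w z = (starRingEnd ℂ) (herm z w) := by
  simp only [herm, map_sum, _root_.map_mul, Complex.conj_conj]
  exact Finset.sum_congr rfl fun j _ => by ring

lemma herm_self {n : ℕ} (z : Fin n → ℂ) : herm z z = ((absq z : ℝ) : ℂ) := by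
  simp [herm, absq, Complex.mul_conj]

lemma herm_neg_right {n : ℕ} (z w : Fin n → ℂ) : herm z (-w) = - herm z w := by
  simp [herm, Finset.sum_neg_distrib]

lemma symp_neg_right {n : ℕ} (z w : Fin n → ℂ) : symp z (-w) = - symp z w := by
  simp [symp, herm_neg_right]

lemma symp_self {n : ℕ} (z : Fin n → ℂ) : symp z z = 0 := by
  simp [symp, herm_self]

lemma symp_zero_right {n : ℕ} (z : Fin n → ℂ) : symp z 0 = 0 := by
  simp [symp, herm]

lemma herm_unitary {n : ℕ} {A : Matrix (Fin n) (Fin n) ℂ} (hA : star A * A = 1)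
    (z w : Fin n → ℂ) : herm (A *ᵥ z) (A *ᵥ w) = herm z w := by
  rw [herm_mulVec, Matrix.mulVec_mulVec, hA, Matrix.one_mulVec]

lemma absq_eq {n : ℕ} (z : Fin n → ℂ) : absq z = (herm z z).re := by
  rw [herm_self]; simp

lemma absq_unitary {n : ℕ} {A : Matrix (Fin n) (Fin n) ℂ} (hA : star A * A = 1)
    (z : Fin n → ℂ) : absq (A *ᵥ z) = absq z := by
  rw [absq_eq, absq_eq, herm_unitary hA]

lemma conj_exp_I (ν s : ℝ) :
    (starRingEnd ℂ) (Complex.exp (Complex.I * ν * s)) = Complex.exp (-(Complex.I * ν * s)) := by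
  rw [← Complex.exp_conj]
  congr 1
  simp only [Complex.conj_I, Complex.conj_ofReal, _root_.map_mul]
  ring

lemma absq_nonneg {n : ℕ} (z : Fin n → ℂ) : 0 ≤ absq z :=
  Finset.sum_nonneg fun j _ => Complex.normSq_nonneg _

lemma absq_pos {n : ℕ} {z : Fin n → ℂ} (hz : z ≠ 0) : 0 < absq z := by
  rcases (absq_nonneg z).lt_or_eq with h | h
  · exact h
  · exfalso
    apply hz
    funext j
    have := (Finset.sum_eq_zero_iff_of_nonneg (fun i _ => Complex.normSq_nonneg (z i))).mp h.symm
    simpa [Complex.normSq_eq_zero] using this j (Finset.mem_univ j)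

/-- Key symplectic identity for the affine action. -/
lemma symp_affine {n : ℕ} {A : Matrix (Fin n) (Fin n) ℂ} (hA : star A * A = 1)
    (b z w : Fin n → ℂ) :
    symp (A *ᵥ z + b) (A *ᵥ w + b) =
      symp z w + symp z (star A *ᵥ b) - symp w (star A *ᵥ b) := by
  have h1 : herm (A *ᵥ z + b) (A *ᵥ w + b)
      = herm z w + herm z (star A *ᵥ b) + ((starRingEnd ℂ) (herm w (star A *ᵥ b)) + herm b b) := by
    rw [herm_add_add, herm_unitary hA, herm_mulVec A z b, herm_conj (A *ᵥ w) b,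
      herm_mulVec A w b]
    ring
  have h2 : (herm b b).im = 0 := by rw [herm_self]; simp
  simp only [symp, h1, Complex.add_im, Complex.conj_im, h2]
  ring

/-- Existence of a unitary matrix mapping r·e₀ to u when |u|² = r², r = √(absq u). -/
lemma exists_unitary_mulVec {n : ℕ} (hn : 0 < n) (u : Fin n → ℂ) :
    ∃ A : Matrix (Fin n) (Fin n) ℂ, star A * A = 1 ∧
      A *ᵥ (fun j => if j = (⟨0, hn⟩ : Fin n) then ((Real.sqrt (absq u) : ℝ) : ℂ) else 0) = u := by
  set r : ℝ := Real.sqrt (absq u) with hr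
  by_cases hu : u = 0
  · refine ⟨1, by simp, ?_⟩
    have hr0 : r = 0 := by simp [hr, hu, absq]
    subst hu
    rw [Matrix.one_mulVec]
    funext j
    simp [hr0]
  · have hpos : 0 < absq u := absq_pos hu
    have hrpos : 0 < r := Real.sqrt_pos.mpr hpos
    have hrr : r * r = absq u := Real.mul_self_sqrt hpos.le
    set u' : EuclideanSpace ℂ (Fin n) := WithLp.toLp 2 fun j => ((r : ℂ))⁻¹ * u j with hu'
    have hinner : (inner ℂ u' u' : ℂ) = 1 := by
      rw [PiLp.inner_apply]
      simp only [RCLike.inner_apply', hu', PiLp.toLp_apply]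
      have : ∀ j, (starRingEnd ℂ) ((r:ℂ)⁻¹ * u j) * ((r:ℂ)⁻¹ * u j)
          = ((r * r)⁻¹ : ℝ) * (Complex.normSq (u j) : ℝ) := by
        intro j
        rw [_root_.map_mul, map_inv₀, Complex.conj_ofReal]
        push_cast
        rw [Complex.normSq_eq_conj_mul_self, mul_inv]
        ring
      rw [Finset.sum_congr rfl fun j _ => this j]
      rw [← Finset.mul_sum]
      have : (∑ j, ((Complex.normSq (u j) : ℝ) : ℂ)) = ((absq u : ℝ) : ℂ) := by
        rw [absq]; push_cast; rfl
      rw [this]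
      rw [hrr]
      norm_cast
      field_simp
    have horth : Orthonormal ℂ (Set.restrict {(⟨0, hn⟩ : Fin n)} (fun _ : Fin n => u')) := by
      rw [orthonormal_iff_ite]
      intro i j
      have : i = j := Subsingleton.elim i j
      subst this; rw [if_pos rfl]; exact hinner
    obtain ⟨bb, hbb⟩ := horth.exists_orthonormalBasis_extension_of_card_eq
      (by simp [finrank_euclideanSpace_fin])
    have hb0 : bb (⟨0, hn⟩ : Fin n) = u' := hbb _ rfl
    refine ⟨Matrix.of fun i j => bb j i, ?_, ?_⟩
    · ext j k
      have hb := (orthonormal_iff_ite.mp bb.orthonormal) j k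
      rw [PiLp.inner_apply] at hb
      simp only [RCLike.inner_apply'] at hb
      simp only [Matrix.mul_apply, Matrix.star_apply, Matrix.of_apply, Complex.star_def,
        Matrix.one_apply]
      exact hb
    · funext i
      simp only [Matrix.mulVec, dotProduct, Matrix.of_apply, mul_ite, mul_zero,
        Finset.sum_ite_eq', Finset.mem_univ, if_true]
      rw [hb0]
      simp only [hu', PiLp.toLp_apply]
      have : ((r:ℂ)) ≠ 0 := by exact_mod_cast hrpos.ne'
      field_simp

/-- A smooth kernel is G-invariant iff it has the form K(z,w) = e^{iνω(z,w)} Q(|z-w|). -/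
theorem stmt_13 {n : ℕ} (ν : ℝ) (hν : 0 < ν)
    (K : (Fin n → ℂ) → (Fin n → ℂ) → ℂ)
    (hK : ContDiff ℝ (⊤ : ℕ∞) (fun p : (Fin n → ℂ) × (Fin n → ℂ) => K p.1 p.2)) :
    (∀ (a : Matrix.unitaryGroup (Fin n) ℂ) (b : Fin n → ℂ) (z w : Fin n → ℂ),
        K ((a : Matrix (Fin n) (Fin n) ℂ) *ᵥ z + b) ((a : Matrix (Fin n) (Fin n) ℂ) *ᵥ w + b) =
          (starRingEnd ℂ) (jfac ν a b z) * K z w * jfac ν a b w) ↔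
      ∃ Q : ℝ → ℂ, ∀ z w : Fin n → ℂ,
        K z w = Complex.exp (Complex.I * ν * symp z w) * Q (Real.sqrt (absq (z - w))) := by
  constructor
  · intro hinv
    -- Step 1: translation invariance
    have hT : ∀ z w : Fin n → ℂ,
        K z w = Complex.exp (Complex.I * ν * symp z w) * K (z - w) 0 := by
      intro z w
      have h := hinv 1 (-w) z w
      simp only [OneMemClass.coe_one, Matrix.one_mulVec, star_one, Matrix.mulVec_neg,
        neg_neg] at h
      rw [jfac, jfac] at h
      simp only [OneMemClass.coe_one, star_one, Matrix.one_mulVec, neg_neg, symp_self,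
        Complex.ofReal_zero, mul_zero, Complex.exp_zero, mul_one] at h
      have hzw : z + -w = z - w := by ring
      have hww : w + -w = 0 := by ring
      rw [hzw, hww, conj_exp_I] at h
      rw [h, ← mul_assoc, ← Complex.exp_add, add_neg_cancel, Complex.exp_zero, one_mul]
    -- Step 2: rotation invariance of u ↦ K u 0
    have hR : ∀ (A : Matrix (Fin n) (Fin n) ℂ), A ∈ Matrix.unitaryGroup (Fin n) ℂ →
        ∀ u : Fin n → ℂ, K (A *ᵥ u) 0 = K u 0 := by
      intro A hA u
      have h := hinv ⟨A, hA⟩ 0 u 0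
      simp only [jfac, Matrix.mulVec_zero, add_zero, neg_zero, symp_zero_right,
        Complex.ofReal_zero, mul_zero, Complex.exp_zero, _root_.map_one, one_mul, mul_one] at h
      exact h
    -- Step 3: radial dependence
    rcases Nat.eq_zero_or_pos n with rfl | hn
    · refine ⟨fun _ => K 0 0, fun z w => ?_⟩
      have hz : z = 0 := funext fun i => i.elim0
      have hw : w = 0 := funext fun i => i.elim0
      subst hz; subst hw
      simp [symp, herm]
    · set Q : ℝ → ℂ := fun r => K (fun j => if j = (⟨0, hn⟩ : Fin n) then ((r : ℝ) : ℂ) else 0) 0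
        with hQdef
      refine ⟨Q, fun z w => ?_⟩
      obtain ⟨A, hA, hAv⟩ := exists_unitary_mulVec hn (z - w)
      have hmem : A ∈ Matrix.unitaryGroup (Fin n) ℂ := Matrix.mem_unitaryGroup_iff'.mpr hA
      have h1 : K (z - w) 0 = Q (Real.sqrt (absq (z - w))) := by
        conv_lhs => rw [← hAv]
        rw [hR A hmem]
      rw [hT z w, h1]
  · rintro ⟨Q, hQ⟩ a b z w
    have hA : star (a : Matrix (Fin n) (Fin n) ℂ) * (a : Matrix (Fin n) (Fin n) ℂ) = 1 :=
      Matrix.UnitaryGroup.star_mul_self a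
    rw [hQ, hQ]
    have hsub : ((a : Matrix (Fin n) (Fin n) ℂ) *ᵥ z + b) - ((a : Matrix (Fin n) (Fin n) ℂ) *ᵥ w + b)
        = (a : Matrix (Fin n) (Fin n) ℂ) *ᵥ (z - w) := by
      rw [Matrix.mulVec_sub]; ring
    rw [hsub, absq_unitary hA]
    rw [jfac, jfac, conj_exp_I]
    rw [symp_affine hA b z w, symp_neg_right, symp_neg_right]
    have hexp : Complex.exp (Complex.I * ν * ((symp z w + symp z (star (a : Matrix (Fin n) (Fin n) ℂ) *ᵥ b) - symp w (star (a : Matrix (Fin n) (Fin n) ℂ) *ᵥ b) : ℝ) : ℂ))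
        = Complex.exp (-(Complex.I * ν * ((-symp z (star (a : Matrix (Fin n) (Fin n) ℂ) *ᵥ b) : ℝ) : ℂ)))
          * Complex.exp (Complex.I * ν * ((symp z w : ℝ) : ℂ))
          * Complex.exp (Complex.I * ν * ((-symp w (star (a : Matrix (Fin n) (Fin n) ℂ) *ᵥ b) : ℝ) : ℂ)) := by
      rw [← Complex.exp_add, ← Complex.exp_add]
      congr 1
      push_cast
      ring
    rw [hexp]
    ring
end
end
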